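/- arXiv:2512.04299 — 5 statements merged into one kernel-verified Lean document; each statement's English description precedes it below -/
import Mathlib

section
/- Let z be a random vector in ℝ^d with 0 < E‖z‖₂² < ∞, let z_1, z_2, … be iid copies of z, and for each n set Z_n := [z_1,…,z_n] ∈ ℝ^{d×n} and M := E[z zᵀ]. Then almost surely the stable rank st(Z_n) converges, as n → ∞, to the effective rank er(M) = tr(M)/‖M‖_op. -/
/-!
Stable rank is scale invariant and satisfies `st(A) = tr(AAᵀ) / ‖AAᵀ‖_op`, so
`st(Z_n) = tr(G_n) / ‖G_n‖_op` for the empirical second-moment matrix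
`G_n = n⁻¹ Z_n Z_nᵀ = n⁻¹ ∑_{i<n} z_i z_iᵀ`. By the strong law of large numbers, applied to each
entry, `G_n → M` almost surely, and `B ↦ tr B / ‖B‖_op` is continuous at `M`, which is nonzero
because `tr M = E‖z‖₂² > 0`.
-/

open MeasureTheory ProbabilityTheory

noncomputable section

/-- Squared Frobenius norm of a real matrix. -/
def frobSq {m n : Type*} [Fintype m] [Fintype n] (A : Matrix m n ℝ) : ℝ :=
  ∑ i, ∑ j, (A i j) ^ 2

/-- Spectral (largest-singular-value) norm of a real matrix. -/
def opNorm {m n : Type*} [Fintype m] [Fintype n] [DecidableEq n] (A : Matrix m n ℝ) : ℝ :=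
  ‖LinearMap.toContinuousLinearMap (Matrix.toEuclideanLin A)‖

/-- Stable rank `st(A) = ‖A‖_F² / ‖A‖_op²`. -/
def stRank {m n : Type*} [Fintype m] [Fintype n] [DecidableEq n] (A : Matrix m n ℝ) : ℝ :=
  frobSq A / (opNorm A) ^ 2

open Matrix Filter Topology Finset
open scoped Matrix.Norms.L2Operator

section StableRank

variable {m n : Type*} [Fintype m] [Fintype n]

lemma frobSq_eq_trace_mul_transpose (A : Matrix m n ℝ) : frobSq A = trace (A * Aᵀ) := by
  simp only [frobSq, trace, diag_apply, mul_apply, transpose_apply, sq]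

omit [Fintype m] in
lemma mul_transpose_eq_sum_vecMulVec (A : Matrix m n ℝ) :
    A * Aᵀ = ∑ j, vecMulVec (fun i => A i j) (fun i => A i j) := by
  ext a b
  simp only [mul_apply, transpose_apply, Matrix.sum_apply, vecMulVec_apply]

variable [DecidableEq n]

lemma opNorm_eq_norm (A : Matrix m n ℝ) : opNorm A = ‖A‖ := rfl

lemma opNorm_mul_transpose [DecidableEq m] (A : Matrix m n ℝ) :
    opNorm (A * Aᵀ) = opNorm A ^ 2 := by
  have hT : ‖Aᵀ‖ = ‖A‖ := by
    rw [← conjTranspose_eq_transpose_of_trivial, l2_opNorm_conjTranspose]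
  have h := l2_opNorm_conjTranspose_mul_self Aᵀ
  rw [conjTranspose_eq_transpose_of_trivial, transpose_transpose, hT] at h
  rw [opNorm_eq_norm, opNorm_eq_norm, h, sq]

lemma stRank_eq_trace_div_opNorm [DecidableEq m] (A : Matrix m n ℝ) :
    stRank A = trace (A * Aᵀ) / opNorm (A * Aᵀ) := by
  rw [stRank, frobSq_eq_trace_mul_transpose, opNorm_mul_transpose]

end StableRank

section EffectiveRank

variable {m : Type*} [Fintype m] [DecidableEq m]

lemma trace_div_opNorm_smul {c : ℝ} (hc : 0 < c) (B : Matrix m m ℝ) :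
    trace (c • B) / opNorm (c • B) = trace B / opNorm B := by
  rw [trace_smul, opNorm_eq_norm, opNorm_eq_norm, norm_smul, Real.norm_of_nonneg hc.le,
    smul_eq_mul, mul_div_mul_left _ _ hc.ne']

lemma continuousAt_trace_div_opNorm {M : Matrix m m ℝ} (hM : M ≠ 0) :
    ContinuousAt (fun B : Matrix m m ℝ => trace B / opNorm B) M :=
  continuous_id.matrix_trace.continuousAt.div continuous_norm.continuousAt
    (norm_ne_zero_iff (E := Matrix m m ℝ) |>.2 hM)

lemma tendsto_stRank_of_tendsto_smul_gram {α : Type*} {l : Filter α} {ι : α → Type*}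
    [∀ k, Fintype (ι k)] [∀ k, DecidableEq (ι k)] {A : ∀ k, Matrix m (ι k) ℝ} {c : α → ℝ}
    (hc : ∀ᶠ k in l, 0 < c k) {M : Matrix m m ℝ}
    (hA : Tendsto (fun k => c k • (A k * (A k)ᵀ)) l (𝓝 M)) (hM : M ≠ 0) :
    Tendsto (fun k => stRank (A k)) l (𝓝 (trace M / opNorm M)) := by
  refine ((continuousAt_trace_div_opNorm hM).tendsto.comp hA).congr' ?_
  filter_upwards [hc] with k hck
  rw [Function.comp_apply, trace_div_opNorm_smul hck, stRank_eq_trace_div_opNorm]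

end EffectiveRank

section SecondMoment

variable {Ω : Type*} [MeasurableSpace Ω] {P : Measure Ω}

lemma ae_tendsto_average_comp_of_iid {E : Type*} [MeasurableSpace E] {X : ℕ → Ω → E}
    (hindep : iIndepFun X P) (hident : ∀ i, IdentDistrib (X i) (X 0) P P) {f : E → ℝ}
    (hf : Measurable f) (hint : Integrable (fun ω => f (X 0 ω)) P) :
    ∀ᵐ ω ∂P, Tendsto (fun n : ℕ => (n : ℝ)⁻¹ * ∑ i ∈ range n, f (X i ω)) atTop
      (𝓝 (∫ ω, f (X 0 ω) ∂P)) :=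
  strong_law_ae (fun i ω => f (X i ω)) hint (fun _ _ hij => (hindep.indepFun hij).comp hf hf)
    (fun i => (hident i).comp hf)

lemma abs_mul_le_sum_sq {ι : Type*} [Fintype ι] (v : ι → ℝ) (a b : ι) :
    |v a * v b| ≤ ∑ c, v c ^ 2 := by
  have ha : v a ^ 2 ≤ ∑ c, v c ^ 2 := single_le_sum (fun c _ => sq_nonneg (v c)) (mem_univ a)
  have hb : v b ^ 2 ≤ ∑ c, v c ^ 2 := single_le_sum (fun c _ => sq_nonneg (v c)) (mem_univ b)
  rw [abs_mul]
  nlinarith [sq_nonneg (|v a| - |v b|), sq_abs (v a), sq_abs (v b)]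

variable {ι : Type*} [Fintype ι]

def secondMoment (P : Measure Ω) (v : Ω → ι → ℝ) : Matrix ι ι ℝ :=
  of fun a b => ∫ ω, v ω a * v ω b ∂P

variable {v : Ω → ι → ℝ}

lemma integrable_mul_apply_of_integrable_sum_sq (hv : AEMeasurable v P)
    (hint : Integrable (fun ω => ∑ c, v ω c ^ 2) P) (a b : ι) :
    Integrable (fun ω => v ω a * v ω b) P :=
  hint.mono' ((hv.eval a).mul (hv.eval b)).aestronglyMeasurable
    (Eventually.of_forall fun ω => abs_mul_le_sum_sq (v ω) a b)

lemma trace_secondMoment (hv : AEMeasurable v P)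
    (hint : Integrable (fun ω => ∑ c, v ω c ^ 2) P) :
    trace (secondMoment P v) = ∫ ω, ∑ c, v ω c ^ 2 ∂P := by
  rw [integral_finsetSum _ fun c _ => by
    simpa only [sq] using integrable_mul_apply_of_integrable_sum_sq hv hint c c]
  simp only [secondMoment, trace, diag_apply, of_apply, sq]

lemma ae_tendsto_empirical_secondMoment {z : ℕ → Ω → ι → ℝ} (hmeas : ∀ i, Measurable (z i))
    (hindep : iIndepFun z P) (hident : ∀ i, IdentDistrib (z i) (z 0) P P)
    (hint : Integrable (fun ω => ∑ c, z 0 ω c ^ 2) P) :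
    ∀ᵐ ω ∂P, Tendsto (fun n : ℕ => (n : ℝ)⁻¹ • ∑ i ∈ range n, vecMulVec (z i ω) (z i ω)) atTop
      (𝓝 (secondMoment P (z 0))) := by
  have hentry : ∀ a b : ι, ∀ᵐ ω ∂P, Tendsto
      (fun n : ℕ => (n : ℝ)⁻¹ * ∑ i ∈ range n, z i ω a * z i ω b) atTop
      (𝓝 (∫ ω, z 0 ω a * z 0 ω b ∂P)) := fun a b =>
    ae_tendsto_average_comp_of_iid (f := fun v => v a * v b) hindep hident
      ((measurable_pi_apply a).mul (measurable_pi_apply b))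
      (integrable_mul_apply_of_integrable_sum_sq (hmeas 0).aemeasurable hint a b)
  filter_upwards [ae_all_iff.2 fun a => ae_all_iff.2 (hentry a)] with ω hω
  refine tendsto_pi_nhds.2 fun a => tendsto_pi_nhds.2 fun b => ?_
  simpa only [secondMoment, Matrix.smul_apply, Matrix.sum_apply, vecMulVec_apply, of_apply,
    smul_eq_mul] using hω a b

end SecondMoment

theorem stable_rank_consistency_general
    {Ω : Type*} [MeasurableSpace Ω] (P : Measure Ω)
    (d : ℕ)
    (z : ℕ → Ω → (Fin d → ℝ))
    (hmeas : ∀ i, Measurable (z i))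
    (hindep : iIndepFun z P)
    (hident : ∀ i, Measure.map (z i) P = Measure.map (z 0) P)
    (hint : Integrable (fun ω => ∑ a, (z 0 ω a) ^ 2) P)
    (hpos : 0 < ∫ ω, ∑ a, (z 0 ω a) ^ 2 ∂P)
    (M : Matrix (Fin d) (Fin d) ℝ)
    (hM : ∀ a b, M a b = ∫ ω, z 0 ω a * z 0 ω b ∂P)
    (Z : (n : ℕ) → Ω → Matrix (Fin d) (Fin n) ℝ)
    (hZ : ∀ n ω (a : Fin d) (t : Fin n), Z n ω a t = z (t : ℕ) ω a) :
    ∀ᵐ ω ∂P, Filter.Tendsto (fun n => stRank (Z n ω)) Filter.atTop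
      (nhds (Matrix.trace M / opNorm M)) := by
  have hidd : ∀ i, IdentDistrib (z i) (z 0) P P := fun i =>
    ⟨(hmeas i).aemeasurable, (hmeas 0).aemeasurable, hident i⟩
  have hM_eq : M = secondMoment P (z 0) := Matrix.ext hM
  have hM0 : M ≠ 0 := by
    rintro rfl
    rw [← trace_secondMoment (hmeas 0).aemeasurable hint, ← hM_eq, trace_zero] at hpos
    exact hpos.false
  have hgram : ∀ n ω, Z n ω * (Z n ω)ᵀ = ∑ i ∈ range n, vecMulVec (z i ω) (z i ω) := by
    intro n ω
    rw [mul_transpose_eq_sum_vecMulVec,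
      ← Fin.sum_univ_eq_sum_range (fun i => vecMulVec (z i ω) (z i ω))]
    simp only [hZ]
  filter_upwards [ae_tendsto_empirical_secondMoment hmeas hindep hidd hint] with ω hω
  refine tendsto_stRank_of_tendsto_smul_gram (c := fun n : ℕ => (n : ℝ)⁻¹)
    (eventually_gt_atTop 0 |>.mono fun n hn => by positivity) ?_ hM0
  simpa only [hgram, hM_eq] using hω

/-- Consistency of the stable rank: if `z_1, z_2, …` are iid copies of a random
vector `z ∈ ℝ^d` with `0 < E‖z‖₂² < ∞`, and `Z_n = [z_1,…,z_n]`, then almost surely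
`st(Z_n) → er(M) = tr(M)/‖M‖_op` where `M = E[zzᵀ]`. -/
theorem stable_rank_consistency
    {Ω : Type*} [MeasurableSpace Ω] (P : Measure Ω) [IsProbabilityMeasure P]
    (d : ℕ) (hd : 0 < d)
    (z : ℕ → Ω → (Fin d → ℝ))
    (hmeas : ∀ i, Measurable (z i))
    (hindep : iIndepFun z P)
    (hident : ∀ i, Measure.map (z i) P = Measure.map (z 0) P)
    (hint : Integrable (fun ω => ∑ a, (z 0 ω a) ^ 2) P)
    (hpos : 0 < ∫ ω, ∑ a, (z 0 ω a) ^ 2 ∂P)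
    (M : Matrix (Fin d) (Fin d) ℝ)
    (hM : ∀ a b, M a b = ∫ ω, z 0 ω a * z 0 ω b ∂P)
    (Z : (n : ℕ) → Ω → Matrix (Fin d) (Fin n) ℝ)
    (hZ : ∀ n ω (a : Fin d) (t : Fin n), Z n ω a t = z (t : ℕ) ω a) :
    ∀ᵐ ω ∂P, Filter.Tendsto (fun n => stRank (Z n ω)) Filter.atTop
      (nhds (Matrix.trace M / opNorm M)) :=
  stable_rank_consistency_general P d z hmeas hindep hident hint hpos M hM Z hZ
end
end

section
/- Fix a vocabulary size V and a token sequence (i_1,…,i_n) ∈ {1,…,V}^n with empirical frequencies p_j := |{t : i_t = j}|/n and p_max := max_j p_j. Let E ∈ ℝ^{d×V} have independent columns e_1,…,e_V, each distributed N(0,I_d), and set X := [e_{i_1},…,e_{i_n}] ∈ ℝ^{d×n}. Then there exists a universal constant C > 0 such that for every ε ∈ (0,1), with probability at least 1 − 4exp(−Cε²d), one has X ≠ 0 and st(X) ≤ ((1+ε)/(1−ε))·(1/p_max). -/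
open MeasureTheory ProbabilityTheory

noncomputable section

/-!
With `p_j` the empirical frequencies, `‖X‖_F² = n ∑ⱼ pⱼ ‖eⱼ‖²`, and testing `X` on the indicator
of the positions of a most frequent token `j*` gives `‖X‖_op² ≥ n p_max ‖e_{j*}‖²`. Both
`∑ⱼ pⱼ ‖eⱼ‖²` and `‖e_{j*}‖²` are nonnegative combinations of independent χ²₁ variables with total
weight `d`, so their moment generating functions obey `𝔼 exp (c Z) ≤ exp (d (c + 4c²))` for
`|c| ≤ 1/4`, a consequence of `(1 - x)⁻¹ ≤ exp (x + 2x²)`. Chernoff's bound at `c = ±ε/8` keeps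
each of them on the right side of `(1 ± ε) d` except with probability `exp (-ε²d/16)`.
-/

open Real Finset

lemma inv_one_sub_le_exp {x : ℝ} (hx : x ≤ 1 / 2) : (1 - x)⁻¹ ≤ exp (x + 2 * x ^ 2) :=
  calc (1 - x)⁻¹ ≤ 1 + (x + 2 * x ^ 2) := by
        -- `(1 - x) (1 + x + 2x²) = 1 + x² (1 - 2x)`
        rw [inv_le_iff_one_le_mul₀ (by linarith)]
        nlinarith [mul_nonneg (sq_nonneg x) (by linarith : (0:ℝ) ≤ 1 - 2 * x)]
    _ ≤ exp (x + 2 * x ^ 2) := by linarith [add_one_le_exp (x + 2 * x ^ 2)]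

-- For `c ≥ 1/2` both sides are junk `0`: the integral diverges and `√` vanishes on `(-∞, 0]`.
lemma mgf_sq_gaussianReal (c : ℝ) :
    mgf (fun x => x ^ 2) (gaussianReal 0 1) c = (√(1 - 2 * c))⁻¹ := by
  have hdens : ∀ x : ℝ, gaussianPDFReal 0 1 x • exp (c * x ^ 2)
      = (√(2 * π))⁻¹ * exp (-(1 / 2 - c) * x ^ 2) := fun x => by
    rw [gaussianPDFReal, smul_eq_mul, mul_assoc, ← exp_add]
    push_cast
    ring_nf
  rw [mgf, integral_gaussianReal_eq_integral_smul one_ne_zero]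
  simp_rw [hdens]
  rw [integral_const_mul, integral_gaussian, ← sqrt_inv, ← sqrt_mul (by positivity), ← sqrt_inv]
  congr 1
  field_simp

section SubexpMGF

variable {Ω : Type*} [MeasurableSpace Ω] {P : Measure Ω} {Z : Ω → ℝ} {a : ℝ}

-- The moment generating function bound of a χ² variable with `a` degrees of freedom.
def HasSubexpMGF (Z : Ω → ℝ) (P : Measure Ω) (a : ℝ) : Prop :=
  ∀ c, |c| ≤ 1 / 4 →
    Integrable (fun ω => exp (c * Z ω)) P ∧ mgf Z P c ≤ exp (a * (c + 4 * c ^ 2))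

lemma hasSubexpMGF_sq_gaussianReal : HasSubexpMGF (fun x => x ^ 2) (gaussianReal 0 1) 1 := by
  intro c hc
  obtain ⟨hc₀, hc₁⟩ := abs_le.mp hc
  have hpos : 0 < 1 - 2 * c := by linarith
  refine ⟨?_, ?_⟩
  · rw [← mgf_pos_iff, mgf_sq_gaussianReal]
    positivity
  · rw [mgf_sq_gaussianReal, ← sqrt_inv, one_mul, sqrt_le_left (exp_pos _).le, ← exp_nat_mul]
    convert inv_one_sub_le_exp (x := 2 * c) (by linarith) using 2
    push_cast
    ring

lemma HasSubexpMGF.const_mul (h : HasSubexpMGF Z P a) (ha : 0 ≤ a) {w : ℝ} (hw₀ : 0 ≤ w)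
    (hw₁ : w ≤ 1) : HasSubexpMGF (fun ω => w * Z ω) P (w * a) := by
  intro c hc
  have hwc : |w * c| ≤ 1 / 4 := by
    rw [abs_mul, abs_of_nonneg hw₀]
    nlinarith [abs_nonneg c]
  obtain ⟨hint, hmgf⟩ := h (w * c) hwc
  refine ⟨by simpa only [mul_assoc, mul_comm w] using hint, ?_⟩
  rw [mgf_const_mul]
  refine hmgf.trans (exp_le_exp.mpr ?_)
  -- `w² ≤ w` on `[0, 1]`
  nlinarith [mul_nonneg (mul_nonneg ha hw₀) (mul_nonneg (sub_nonneg.mpr hw₁) (sq_nonneg c))]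

lemma HasSubexpMGF.sum [IsFiniteMeasure P] {ι : Type*} {Z : ι → Ω → ℝ} {a : ι → ℝ}
    {s : Finset ι} (h_indep : iIndepFun Z P) (h_meas : ∀ j, Measurable (Z j))
    (h : ∀ j ∈ s, HasSubexpMGF (Z j) P (a j)) :
    HasSubexpMGF (∑ j ∈ s, Z j) P (∑ j ∈ s, a j) := by
  intro c hc
  refine ⟨h_indep.integrable_exp_mul_sum h_meas fun j hj => (h j hj c hc).1, ?_⟩
  rw [h_indep.mgf_sum h_meas, sum_mul, exp_sum]
  exact prod_le_prod (fun j _ => mgf_nonneg) fun j hj => (h j hj c hc).2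

lemma HasSubexpMGF.comp_of_map {Ω' : Type*} [MeasurableSpace Ω'] {f : Ω' → ℝ} {Y : Ω → Ω'}
    (h : HasSubexpMGF f (P.map Y) a) (hY : AEMeasurable Y P) (hf : Measurable f) :
    HasSubexpMGF (fun ω => f (Y ω)) P a := by
  intro c hc
  have hmeas : AEStronglyMeasurable (fun x => exp (c * f x)) (P.map Y) := by fun_prop
  obtain ⟨hint, hmgf⟩ := h c hc
  exact ⟨(integrable_map_measure hmeas hY).mp hint, mgf_map hY hmeas ▸ hmgf⟩

lemma hasSubexpMGF_sum_sq_pi_gaussianReal {ι : Type*} [Fintype ι] :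
    HasSubexpMGF (fun x : ι → ℝ => ∑ i, x i ^ 2) (Measure.pi fun _ => gaussianReal 0 1)
      (Fintype.card ι) := by
  have hcoord (i : ι) :
      HasSubexpMGF (fun x : ι → ℝ => x i ^ 2) (Measure.pi fun _ => gaussianReal 0 1) 1 := by
    have hmarg := (measurePreserving_eval (fun _ : ι => gaussianReal 0 1) i).map_eq
    exact (hmarg ▸ hasSubexpMGF_sq_gaussianReal).comp_of_map
      (measurable_pi_apply i).aemeasurable (by fun_prop)
  have h := HasSubexpMGF.sum (s := univ)
    (iIndepFun_pi (X := fun _ x => x ^ 2) fun _ => by fun_prop) (fun i => by fun_prop)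
    fun i _ => hcoord i
  simpa [sum_fn] using h

lemma HasSubexpMGF.measureReal_ge_le [IsFiniteMeasure P] (h : HasSubexpMGF Z P a) {ε : ℝ}
    (hε₀ : 0 < ε) (hε₂ : ε ≤ 2) :
    P.real {ω | (1 + ε) * a ≤ Z ω} ≤ exp (-(1 / 16 * ε ^ 2 * a)) := by
  obtain ⟨hint, hmgf⟩ := h (ε / 8) (by rw [abs_of_pos (by positivity)]; linarith)
  calc P.real {ω | (1 + ε) * a ≤ Z ω}
      ≤ exp (-(ε / 8) * ((1 + ε) * a)) * mgf Z P (ε / 8) :=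
        measure_ge_le_exp_mul_mgf _ (by positivity) hint
    _ ≤ exp (-(ε / 8) * ((1 + ε) * a)) * exp (a * (ε / 8 + 4 * (ε / 8) ^ 2)) := by gcongr
    _ = exp (-(1 / 16 * ε ^ 2 * a)) := by rw [← exp_add]; ring_nf

lemma HasSubexpMGF.measureReal_le_le [IsFiniteMeasure P] (h : HasSubexpMGF Z P a) {ε : ℝ}
    (hε₀ : 0 < ε) (hε₂ : ε ≤ 2) :
    P.real {ω | Z ω ≤ (1 - ε) * a} ≤ exp (-(1 / 16 * ε ^ 2 * a)) := by
  obtain ⟨hint, hmgf⟩ := h (-(ε / 8)) (by rw [abs_neg, abs_of_pos (by positivity)]; linarith)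
  calc P.real {ω | Z ω ≤ (1 - ε) * a}
      ≤ exp (-(-(ε / 8)) * ((1 - ε) * a)) * mgf Z P (-(ε / 8)) :=
        measure_le_le_exp_mul_mgf _ (by linarith) hint
    _ ≤ exp (-(-(ε / 8)) * ((1 - ε) * a)) * exp (a * (-(ε / 8) + 4 * (-(ε / 8)) ^ 2)) := by
        gcongr
    _ = exp (-(1 / 16 * ε ^ 2 * a)) := by rw [← exp_add]; ring_nf

end SubexpMGF

section EmpiricalFreq

variable {n ι : Type*} [Fintype n] [DecidableEq ι]

def empiricalFreq (tok : n → ι) (j : ι) : ℝ := (#{t | tok t = j} : ℝ) / Fintype.card n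

lemma card_mul_empiricalFreq (tok : n → ι) (j : ι) :
    Fintype.card n * empiricalFreq tok j = #{t | tok t = j} := by
  rcases (Fintype.card n).eq_zero_or_pos with hn | hn
  · have : IsEmpty n := Fintype.card_eq_zero_iff.mp hn
    simp
  · rw [empiricalFreq, mul_div_cancel₀ _ (by positivity)]

lemma empiricalFreq_nonneg (tok : n → ι) (j : ι) : 0 ≤ empiricalFreq tok j := by
  unfold empiricalFreq
  positivity

lemma empiricalFreq_le_one (tok : n → ι) (j : ι) : empiricalFreq tok j ≤ 1 :=
  div_le_one_of_le₀ (mod_cast card_le_univ _) (Nat.cast_nonneg _)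

lemma empiricalFreq_apply_pos (tok : n → ι) (t : n) : 0 < empiricalFreq tok (tok t) := by
  have : Nonempty n := ⟨t⟩
  have : 0 < #{s | tok s = tok t} := card_pos.mpr ⟨t, by simp⟩
  unfold empiricalFreq
  positivity

lemma sum_empiricalFreq [Fintype ι] [Nonempty n] (tok : n → ι) : ∑ j, empiricalFreq tok j = 1 := by
  have hcard := card_eq_sum_card_fiberwise (s := univ) (t := univ) (f := tok) fun _ _ => mem_univ _
  simp only [empiricalFreq, ← sum_div, ← Nat.cast_sum, ← hcard, card_univ]
  exact div_self (by positivity)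

lemma exists_empiricalFreq_eq_sup' [Fintype ι] (tok : n → ι) (t : n) :
    ∃ j, univ.sup' ⟨tok t, mem_univ _⟩ (empiricalFreq tok) = empiricalFreq tok j ∧
      0 < empiricalFreq tok j := by
  obtain ⟨j, -, hj⟩ := exists_mem_eq_sup' ⟨tok t, mem_univ _⟩ (empiricalFreq tok)
  exact ⟨j, hj, hj ▸ (empiricalFreq_apply_pos tok t).trans_le (le_sup' _ (mem_univ _))⟩

end EmpiricalFreq

section StableRank

variable {m n ι : Type*} [Fintype m] [Fintype n] [Fintype ι] [DecidableEq ι]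

lemma frobSq_eq_card_mul_sum_empiricalFreq {A : Matrix m n ℝ} {tok : n → ι} {w : ι → m → ℝ}
    (hA : ∀ i t, A i t = w (tok t) i) :
    frobSq A = Fintype.card n * ∑ j, empiricalFreq tok j * ∑ i, w j i ^ 2 := by
  simp_rw [mul_sum, ← mul_assoc, card_mul_empiricalFreq, ← mul_sum, ← nsmul_eq_mul, ← sum_const]
  rw [sum_fiberwise' univ tok fun j => ∑ i, w j i ^ 2, frobSq, sum_comm]
  simp [hA]

variable [DecidableEq n]

lemma opNorm_zero : opNorm (0 : Matrix m n ℝ) = 0 := by simp [opNorm]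

lemma card_mul_sum_sq_le_opNorm_sq (A : Matrix m n ℝ) {s : Finset n} {w : m → ℝ}
    (hA : ∀ i, ∀ t ∈ s, A i t = w i) : #s * ∑ i, w i ^ 2 ≤ opNorm A ^ 2 := by
  set T := LinearMap.toContinuousLinearMap (Matrix.toEuclideanLin A)
  set v : EuclideanSpace ℝ n := WithLp.toLp 2 fun t => if t ∈ s then 1 else 0
  have hv : ‖v‖ ^ 2 = #s := by
    simp [EuclideanSpace.real_norm_sq_eq, v]
  have hTv : ‖T v‖ ^ 2 = #s ^ 2 * ∑ i, w i ^ 2 := by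
    rw [EuclideanSpace.real_norm_sq_eq, mul_sum]
    refine sum_congr rfl fun i _ => ?_
    simp only [T, v, LinearMap.coe_toContinuousLinearMap', Matrix.toLpLin_apply, Matrix.mulVec,
      dotProduct, mul_ite, mul_one, mul_zero, sum_ite_mem, univ_inter]
    rw [sum_congr rfl (hA i), sum_const, nsmul_eq_mul, mul_pow]
  have hsq : #s ^ 2 * ∑ i, w i ^ 2 ≤ opNorm A ^ 2 * #s := by
    rw [← hTv, ← hv, ← mul_pow]
    exact pow_le_pow_left₀ (norm_nonneg _) (T.le_opNorm v) 2
  rcases (#s).eq_zero_or_pos with hs | hs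
  · simp [hs]; positivity
  · have : (0 : ℝ) < #s := by exact_mod_cast hs
    nlinarith

lemma stRank_le_div {A : Matrix m n ℝ} {a b : ℝ} (hb : 0 < b) (hF : frobSq A ≤ a)
    (hop : b ≤ opNorm A ^ 2) : A ≠ 0 ∧ stRank A ≤ a / b := by
  refine ⟨?_, div_le_div₀ ((by unfold frobSq; positivity : 0 ≤ frobSq A).trans hF) hF hb hop⟩
  rintro rfl
  simp [opNorm_zero] at hop
  linarith

lemma stRank_le_div_empiricalFreq {A : Matrix m n ℝ} {tok : n → ι} {w : ι → m → ℝ}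
    (hA : ∀ i t, A i t = w (tok t) i) {j : ι} (hj : 0 < empiricalFreq tok j) {ε D : ℝ}
    (hε : ε < 1) (hD : 0 < D) (hsum : ∑ k, empiricalFreq tok k * ∑ i, w k i ^ 2 ≤ (1 + ε) * D)
    (hwj : (1 - ε) * D ≤ ∑ i, w j i ^ 2) :
    A ≠ 0 ∧ stRank A ≤ (1 + ε) / (1 - ε) * (1 / empiricalFreq tok j) := by
  have hN : (0 : ℝ) < Fintype.card n := by
    by_contra! h
    simp [empiricalFreq, le_antisymm h (Nat.cast_nonneg _)] at hj
  have hF : frobSq A ≤ Fintype.card n * ((1 + ε) * D) := by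
    rw [frobSq_eq_card_mul_sum_empiricalFreq hA]
    gcongr
  have hop : Fintype.card n * empiricalFreq tok j * ((1 - ε) * D) ≤ opNorm A ^ 2 :=
    calc _ ≤ Fintype.card n * empiricalFreq tok j * ∑ i, w j i ^ 2 := by gcongr
      _ ≤ opNorm A ^ 2 := by
        rw [card_mul_empiricalFreq]
        exact card_mul_sum_sq_le_opNorm_sq A fun i t ht => by rw [hA, (mem_filter.mp ht).2]
  have hε' : 0 < 1 - ε := by linarith
  convert stRank_le_div (by positivity) hF hop using 2
  field_simp

end StableRank

lemma one_sub_measureReal_sub_measureReal_le {Ω : Type*} [MeasurableSpace Ω] {P : Measure Ω}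
    [IsProbabilityMeasure P] {A B G : Set Ω} (h : ∀ ω, ω ∉ A → ω ∉ B → ω ∈ G) :
    1 - P.real A - P.real B ≤ P.real G := by
  have hcover : Set.univ ⊆ A ∪ B ∪ G := fun ω _ => by
    by_contra hω
    simp only [Set.mem_union, not_or] at hω
    exact hω.2 (h ω hω.1.1 hω.1.2)
  have := measureReal_mono hcover (measure_ne_top P _)
  have := measureReal_union_le (μ := P) (A ∪ B) G
  have := measureReal_union_le (μ := P) A B
  simp only [probReal_univ] at *
  linarith

/-- Token embeddings have low stable rank: with independent standard Gaussian
embedding columns `e_1,…,e_V ~ N(0,I_d)` and `X = [e_{i_1},…,e_{i_n}]`, there is a universal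
constant `C > 0` such that for every `ε ∈ (0,1)`, with probability at least `1 − 4exp(−Cε²d)`,
`X ≠ 0` and `st(X) ≤ ((1+ε)/(1−ε))·(1/p_max)`. -/
theorem token_embedding_low_stable_rank :
    ∃ C : ℝ, 0 < C ∧
      ∀ (Ω : Type) [MeasurableSpace Ω] (P : Measure Ω) [IsProbabilityMeasure P]
        (d V n : ℕ) (_hd : 0 < d) (hn : 0 < n)
        (tok : Fin n → Fin V)
        (e : Fin V → Ω → (Fin d → ℝ))
        (_hmeas : ∀ j, Measurable (e j))
        (_hindep : iIndepFun e P)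
        (_hlaw : ∀ j, Measure.map (e j) P = Measure.pi fun _ : Fin d => gaussianReal 0 1)
        (X : Ω → Matrix (Fin d) (Fin n) ℝ)
        (_hX : ∀ ω (i : Fin d) (t : Fin n), X ω i t = e (tok t) ω i)
        (pmax : ℝ)
        (_hpmax : pmax = Finset.univ.sup'
          (Finset.univ_nonempty_iff.mpr ⟨tok ⟨0, hn⟩⟩)
          (fun j => ((Finset.univ.filter fun t => tok t = j).card : ℝ) / n))
        (ε : ℝ) (_hε : ε ∈ Set.Ioo (0:ℝ) 1),
        ENNReal.ofReal (1 - 4 * Real.exp (-(C * ε ^ 2 * d))) ≤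
          P {ω | X ω ≠ 0 ∧ stRank (X ω) ≤ ((1 + ε) / (1 - ε)) * (1 / pmax)} := by
  refine ⟨1 / 16, by norm_num, ?_⟩
  intro Ω _ P _ d V n hd hn tok e hmeas hindep hlaw X hX pmax hpmax ε ⟨hε₀, hε₁⟩
  have : Nonempty (Fin n) := ⟨⟨0, hn⟩⟩
  obtain ⟨jm, hjm, hjm_pos⟩ := exists_empiricalFreq_eq_sup' tok ⟨0, hn⟩
  have hpmax_eq : pmax = empiricalFreq tok jm := by
    rw [hpmax, ← hjm]
    congr 1 with j
    simp [empiricalFreq]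
  have hnormSq (j : Fin V) : HasSubexpMGF (fun ω => ∑ i, e j ω i ^ 2) P d := by
    have h := (hlaw j ▸ hasSubexpMGF_sum_sq_pi_gaussianReal).comp_of_map
      (hmeas j).aemeasurable (by fun_prop)
    rwa [Fintype.card_fin] at h
  have hweighted :
      HasSubexpMGF (fun ω => ∑ j, empiricalFreq tok j * ∑ i, e j ω i ^ 2) P d := by
    have h := HasSubexpMGF.sum (s := univ)
      (hindep.comp (fun j x => empiricalFreq tok j * ∑ i, x i ^ 2) fun j => by fun_prop)
      (fun j => by fun_prop) fun j _ => (hnormSq j).const_mul (Nat.cast_nonneg d)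
        (empiricalFreq_nonneg tok j) (empiricalFreq_le_one tok j)
    simpa [sum_fn, Function.comp_def, ← sum_mul, sum_empiricalFreq] using h
  refine ENNReal.ofReal_le_of_le_toReal ((?_ : _ ≤ _).trans
    (one_sub_measureReal_sub_measureReal_le (P := P)
      (A := {ω | (1 + ε) * d ≤ ∑ j, empiricalFreq tok j * ∑ i, e j ω i ^ 2})
      (B := {ω | ∑ i, e jm ω i ^ 2 ≤ (1 - ε) * d}) fun ω hup hlo => ?_))
  · linarith [hweighted.measureReal_ge_le hε₀ (by linarith),
      (hnormSq jm).measureReal_le_le hε₀ (by linarith), exp_pos (-(1 / 16 * ε ^ 2 * d))]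
  · simp only [Set.mem_ofPred_eq, not_le] at hup hlo
    rw [hpmax_eq]
    exact stRank_le_div_empiricalFreq (hX ω) hjm_pos hε₁ (by positivity) hup.le hlo.le
end
end

section
/- Let X = [x_1,…,x_n] ∈ ℝ^{d×n} be a deterministic matrix whose columns satisfy L ≤ ‖x_t‖₂² ≤ U for all t = 1,…,n, for some 0 < L ≤ U < ∞. Define A^rms := RMSNorm(X) to be the matrix with columns a_t := √d · x_t/‖x_t‖₂. Then st(A^rms) ≤ (U/L) · st(X). -/
/-!
RMSNorm multiplies column `t` by `c t = √d / ‖x_t‖`, so `A^rms = X * diagonal c` and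
`X = A^rms * diagonal c⁻¹`. Right multiplication by a diagonal matrix whose squared entries are at
most `C` scales both `‖·‖_F²` and `‖·‖_op²` by at most `C`. Since `c t ^ 2 ≤ d / L` and
`c t ^ (-2) ≤ U / d`, this gives `‖A^rms‖_F² ≤ (d / L) ‖X‖_F²` and `‖X‖_op² ≤ (U / d) ‖A^rms‖_op²`,
and the factor `d` cancels in the quotient.
-/

noncomputable section

open Matrix
open scoped Matrix.Norms.L2Operator

section

variable {m n : Type*} [Fintype m] [Fintype n]

theorem frobSq_nonneg (A : Matrix m n ℝ) : 0 ≤ frobSq A := by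
  unfold frobSq; positivity

theorem frobSq_mul_diagonal_le [DecidableEq n] {A : Matrix m n ℝ} {c : n → ℝ} {C : ℝ}
    (hc : ∀ j, c j ^ 2 ≤ C) : frobSq (A * diagonal c) ≤ C * frobSq A := by
  simp only [frobSq, mul_diagonal, Finset.mul_sum, mul_pow]
  refine Finset.sum_le_sum fun i _ => Finset.sum_le_sum fun j _ => ?_
  rw [mul_comm C]
  exact mul_le_mul_of_nonneg_left (hc j) (sq_nonneg _)

theorem opNorm_eq_l2_opNorm [DecidableEq n] (A : Matrix m n ℝ) : opNorm A = ‖A‖ := rfl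

theorem opNorm_pos [DecidableEq n] {A : Matrix m n ℝ} (hA : A ≠ 0) : 0 < opNorm A := by
  rw [opNorm_eq_l2_opNorm]
  exact norm_pos_iff.mpr hA

theorem opNorm_mul_diagonal_sq_le [DecidableEq n] {A : Matrix m n ℝ} {c : n → ℝ} {C : ℝ}
    (hc : ∀ j, c j ^ 2 ≤ C) : opNorm (A * diagonal c) ^ 2 ≤ C * opNorm A ^ 2 := by
  rw [opNorm_eq_l2_opNorm, opNorm_eq_l2_opNorm]
  rcases isEmpty_or_nonempty n with hn | ⟨⟨j⟩⟩
  · simp [Subsingleton.elim A 0]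
  have hC : 0 ≤ C := (sq_nonneg _).trans (hc j)
  have hdiag : ‖(diagonal c : Matrix n n ℝ)‖ ≤ √C := by
    rw [l2_opNorm_diagonal]
    exact pi_norm_le_iff_of_nonneg (Real.sqrt_nonneg C) |>.mpr fun j => Real.abs_le_sqrt (hc j)
  calc ‖A * diagonal c‖ ^ 2 ≤ (‖A‖ * √C) ^ 2 := by
        gcongr
        exact (l2_opNorm_mul A _).trans (by gcongr)
    _ = C * ‖A‖ ^ 2 := by rw [mul_pow, Real.sq_sqrt hC, mul_comm]

theorem stRank_le_mul_of_frobSq_le_of_opNorm_sq_le [DecidableEq n] {m' n' : Type*} [Fintype m']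
    [Fintype n'] [DecidableEq n'] {A : Matrix m n ℝ} {B : Matrix m' n' ℝ} {α γ : ℝ}
    (hfrob : frobSq A ≤ α * frobSq B) (hop : opNorm B ^ 2 ≤ γ * opNorm A ^ 2) (hB : B ≠ 0) :
    stRank A ≤ α * γ * stRank B := by
  have hb : 0 < opNorm B ^ 2 := by have := opNorm_pos hB; positivity
  have ha : 0 < opNorm A ^ 2 := by
    rcases (sq_nonneg (opNorm A)).eq_or_lt with h | h
    · rw [← h, mul_zero] at hop
      exact absurd hop hb.not_ge
    · exact h
  have hαB : 0 ≤ α * frobSq B := (frobSq_nonneg A).trans hfrob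
  calc stRank A ≤ α * frobSq B / opNorm A ^ 2 := div_le_div_of_nonneg_right hfrob ha.le
    _ ≤ α * frobSq B * γ / opNorm B ^ 2 := by
        rw [div_le_div_iff₀ ha hb, mul_assoc _ γ]
        exact mul_le_mul_of_nonneg_left hop hαB
    _ = α * γ * stRank B := by unfold stRank; ring

end

theorem rmsnorm_stable_rank_general
    (d n : ℕ)
    (X : Matrix (Fin d) (Fin n) ℝ)
    (L U : ℝ) (hL : 0 < L)
    (hcol : ∀ t, L ≤ ∑ i, (X i t) ^ 2 ∧ ∑ i, (X i t) ^ 2 ≤ U)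
    (Arms : Matrix (Fin d) (Fin n) ℝ)
    (hArms : ∀ i t, Arms i t = Real.sqrt d * X i t / Real.sqrt (∑ i', (X i' t) ^ 2)) :
    stRank Arms ≤ (U / L) * stRank X := by
  rcases isEmpty_or_nonempty (Fin n) with hn | ⟨⟨t₀⟩⟩
  · simp [stRank, frobSq]
  set S : Fin n → ℝ := fun t => ∑ i, X i t ^ 2
  have hS : ∀ t, 0 < S t := fun t => hL.trans_le (hcol t).1
  have hX : X ≠ 0 := by rintro rfl; simpa [S] using hS t₀
  have hd : (0 : ℝ) < d := by
    have : d ≠ 0 := by rintro rfl; simpa [S] using hS t₀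
    positivity
  have hArms_eq : Arms = X * diagonal fun t => √d / √(S t) := by
    ext i t; rw [hArms, mul_diagonal]; ring
  have hX_eq : X = Arms * diagonal fun t => √(S t) / √d := by
    have hinv : ((diagonal fun t => √d / √(S t)) * diagonal fun t => √(S t) / √d) = 1 := by
      rw [diagonal_mul_diagonal, ← diagonal_one]
      congr 1 with t
      have := hS t
      field_simp
    rw [hArms_eq, Matrix.mul_assoc, hinv, Matrix.mul_one]
  have hfrob : frobSq Arms ≤ d / L * frobSq X := by
    refine hArms_eq ▸ frobSq_mul_diagonal_le fun t => ?_
    rw [div_pow, Real.sq_sqrt hd.le, Real.sq_sqrt (hS t).le]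
    exact div_le_div_of_nonneg_left hd.le hL (hcol t).1
  have hop : opNorm X ^ 2 ≤ U / d * opNorm Arms ^ 2 := by
    refine hX_eq ▸ opNorm_mul_diagonal_sq_le fun t => ?_
    rw [div_pow, Real.sq_sqrt hd.le, Real.sq_sqrt (hS t).le]
    exact div_le_div_of_nonneg_right (hcol t).2 hd.le
  calc stRank Arms ≤ d / L * (U / d) * stRank X :=
        stRank_le_mul_of_frobSq_le_of_opNorm_sq_le hfrob hop hX
    _ = U / L * stRank X := by field_simp

/-- RMSNorm propagation of the stable rank: if the columns of `X` satisfy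
`L ≤ ‖x_t‖₂² ≤ U`, then the RMS-normalized matrix `A^rms` (columns `√d · x_t/‖x_t‖₂`)
satisfies `st(A^rms) ≤ (U/L)·st(X)`. -/
theorem rmsnorm_stable_rank
    (d n : ℕ)
    (X : Matrix (Fin d) (Fin n) ℝ)
    (L U : ℝ) (hL : 0 < L) (hLU : L ≤ U)
    (hcol : ∀ t, L ≤ ∑ i, (X i t) ^ 2 ∧ ∑ i, (X i t) ^ 2 ≤ U)
    (Arms : Matrix (Fin d) (Fin n) ℝ)
    (hArms : ∀ i t, Arms i t = Real.sqrt d * X i t / Real.sqrt (∑ i', (X i' t) ^ 2)) :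
    stRank Arms ≤ (U / L) * stRank X :=
  rmsnorm_stable_rank_general d n X L U hL hcol Arms hArms
end
end

section
/- Let a ∈ ℝ be nonzero, z ∈ ℝ^p, and D ∈ ℝ^{(q−1)×p} with q−1 ≤ p, and define the block matrix M := [[a, zᵀ],[0, D]] ∈ ℝ^{q×(p+1)}. Then the q-th largest singular value of M satisfies σ_q(M) ≥ min{|a|, σ_{q−1}(D)} / (1 + ‖z‖₂/|a|), where σ_j(·) denotes the j-th largest singular value. -/
/-!
Split a unit vector as `u = (t, v)`. The first entry of `uᵀM` is `t a`, so `|t| ≤ ‖uᵀM‖ / |a|`.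
Removing the off-diagonal part `t zᵀ` from `uᵀM` therefore costs at most `‖z‖ ‖uᵀM‖ / |a|`,
and what is left is `uᵀ diag(a, D)`, of norm at least `min {|a|, σ(D)}`.
-/

noncomputable section

/-- The smallest singular value of `N : Matrix α β ℝ` with `#α ≤ #β`, characterized as
`min_{‖u‖₂ = 1} ‖Nᵀu‖₂`; for a matrix with `q` rows and at least `q` columns this is the
`q`-th largest singular value `σ_q(N)`. -/
def minSingularValue {α β : Type*} [Fintype α] [Fintype β] (N : Matrix α β ℝ) : ℝ :=
  sInf ((fun u : α → ℝ => Real.sqrt (∑ j, (∑ i, u i * N i j) ^ 2)) ''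
    {u | ∑ i, (u i) ^ 2 = 1})

open Matrix WithLp

local notation "‖" x "‖₂" => ‖WithLp.toLp 2 x‖

section EuclideanNorm

variable {ι κ : Type*} [Fintype ι] [Fintype κ]

theorem norm_toLp_two_eq_sqrt (x : ι → ℝ) : ‖x‖₂ = √(∑ i, x i ^ 2) := by
  simp [EuclideanSpace.norm_eq]

theorem norm_toLp_two_sum_elim_sq (x : ι → ℝ) (y : κ → ℝ) :
    ‖Sum.elim x y‖₂ ^ 2 = ‖x‖₂ ^ 2 + ‖y‖₂ ^ 2 := by
  simp [EuclideanSpace.norm_sq_eq, Fintype.sum_sum_type]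

theorem norm_toLp_two_le_sum_elim_left (x : ι → ℝ) (y : κ → ℝ) : ‖x‖₂ ≤ ‖Sum.elim x y‖₂ :=
  le_of_sq_le_sq (by rw [norm_toLp_two_sum_elim_sq]; nlinarith [sq_nonneg ‖y‖₂]) (norm_nonneg _)

theorem norm_toLp_two_sum_elim_zero (y : κ → ℝ) : ‖Sum.elim (0 : ι → ℝ) y‖₂ = ‖y‖₂ := by
  have h := norm_toLp_two_sum_elim_sq (0 : ι → ℝ) y
  rw [toLp_zero, norm_zero, zero_pow two_ne_zero, zero_add] at h
  exact (pow_left_inj₀ (norm_nonneg _) (norm_nonneg _) two_ne_zero).1 h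

theorem mul_norm_toLp_two_sum_elim_le {ι' κ' : Type*} [Fintype ι'] [Fintype κ'] {c : ℝ}
    (hc : 0 ≤ c) {x : ι → ℝ} {y : κ → ℝ} {x' : ι' → ℝ} {y' : κ' → ℝ}
    (hx : c * ‖x‖₂ ≤ ‖x'‖₂) (hy : c * ‖y‖₂ ≤ ‖y'‖₂) :
    c * ‖Sum.elim x y‖₂ ≤ ‖Sum.elim x' y'‖₂ := by
  refine le_of_sq_le_sq ?_ (norm_nonneg _)
  rw [mul_pow, norm_toLp_two_sum_elim_sq, norm_toLp_two_sum_elim_sq, mul_add, ← mul_pow,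
    ← mul_pow]
  gcongr

theorem norm_toLp_two_unit (x : Unit → ℝ) : ‖x‖₂ = |x ()| := by
  simp [EuclideanSpace.norm_eq, Real.sqrt_sq_eq_abs]

end EuclideanNorm

theorem vecMul_of_const_row {κ : Type*} (x : Unit → ℝ) (z : κ → ℝ) :
    x ᵥ* Matrix.of (fun _ j => z j) = x () • z := by
  ext j
  simp [vecMul, dotProduct]

section MinSingularValue

variable {α β : Type*} [Fintype α] [Fintype β]

theorem minSingularValue_eq_sInf (N : Matrix α β ℝ) :
    minSingularValue N = sInf ((fun u => ‖u ᵥ* N‖₂) '' {u | ‖u‖₂ = 1}) := by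
  simp only [minSingularValue, norm_toLp_two_eq_sqrt, Real.sqrt_eq_one]
  rfl

theorem minSingularValue_nonneg (N : Matrix α β ℝ) : 0 ≤ minSingularValue N := by
  rw [minSingularValue_eq_sInf]
  exact Real.sInf_nonneg (by rintro _ ⟨u, -, rfl⟩; exact norm_nonneg _)

theorem minSingularValue_mul_norm_le (N : Matrix α β ℝ) (u : α → ℝ) :
    minSingularValue N * ‖u‖₂ ≤ ‖u ᵥ* N‖₂ := by
  rcases eq_or_ne u 0 with rfl | hu
  · simp
  have hpos : 0 < ‖u‖₂ := norm_pos_iff.2 (by simpa using hu)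
  have hunit : ‖‖u‖₂⁻¹ • u‖₂ = 1 := by
    rw [toLp_smul, norm_smul, norm_inv, norm_norm, inv_mul_cancel₀ hpos.ne']
  have hle : minSingularValue N ≤ ‖(‖u‖₂⁻¹ • u) ᵥ* N‖₂ := by
    rw [minSingularValue_eq_sInf]
    exact csInf_le ⟨0, by rintro _ ⟨v, -, rfl⟩; exact norm_nonneg _⟩ ⟨_, hunit, rfl⟩
  rw [smul_vecMul, toLp_smul, norm_smul, norm_inv, norm_norm] at hle
  rw [mul_comm]
  exact (le_inv_mul_iff₀ hpos).1 hle

theorem le_minSingularValue [Nonempty α] {N : Matrix α β ℝ} {c : ℝ}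
    (h : ∀ u, ‖u‖₂ = 1 → c ≤ ‖u ᵥ* N‖₂) : c ≤ minSingularValue N := by
  classical
  rw [minSingularValue_eq_sInf]
  obtain ⟨i⟩ := ‹Nonempty α›
  refine le_csInf ⟨_, Pi.single i 1, ?_, rfl⟩ (by rintro _ ⟨u, hu, rfl⟩; exact h u hu)
  simp

end MinSingularValue

section BlockTriangular

variable {k l m n : Type*} [Fintype k] [Fintype l] [Fintype m] [Fintype n]

theorem min_mul_norm_le_norm_vecMul_fromBlocks_diagonal {A : Matrix k m ℝ} (D : Matrix l n ℝ)
    {α : ℝ} (hα : 0 ≤ α) (hA : ∀ x : k → ℝ, α * ‖x‖₂ ≤ ‖x ᵥ* A‖₂) (u : k ⊕ l → ℝ) :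
    min α (minSingularValue D) * ‖u‖₂ ≤ ‖u ᵥ* fromBlocks A 0 0 D‖₂ := by
  have hw : u ᵥ* fromBlocks A 0 0 D = Sum.elim ((u ∘ Sum.inl) ᵥ* A) ((u ∘ Sum.inr) ᵥ* D) := by
    simp [vecMul_fromBlocks]
  rw [hw]
  conv_lhs => rw [← Sum.elim_comp_inl_inr u]
  refine mul_norm_toLp_two_sum_elim_le (le_min hα (minSingularValue_nonneg D)) ?_ ?_
  · exact (mul_le_mul_of_nonneg_right (min_le_left _ _) (norm_nonneg _)).trans (hA _)
  · exact (mul_le_mul_of_nonneg_right (min_le_right _ _) (norm_nonneg _)).trans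
      (minSingularValue_mul_norm_le D _)

theorem min_div_le_minSingularValue_fromBlocks [Nonempty k] {A : Matrix k m ℝ}
    {B : Matrix k n ℝ} (D : Matrix l n ℝ) {α β : ℝ} (hα : 0 < α) (hβ : 0 ≤ β)
    (hA : ∀ x : k → ℝ, α * ‖x‖₂ ≤ ‖x ᵥ* A‖₂) (hB : ∀ x : k → ℝ, ‖x ᵥ* B‖₂ ≤ β * ‖x‖₂) :
    min α (minSingularValue D) / (1 + β / α) ≤ minSingularValue (fromBlocks A B 0 D) := by
  refine le_minSingularValue fun u hu => ?_
  rw [div_le_iff₀ (by positivity)]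
  set x := u ∘ Sum.inl
  set y := u ∘ Sum.inr
  set S := ‖u ᵥ* fromBlocks A B 0 D‖₂
  have hw : u ᵥ* fromBlocks A B 0 D = Sum.elim (x ᵥ* A) (x ᵥ* B + y ᵥ* D) := by
    simp [vecMul_fromBlocks, x, y]
  have hxS : α * ‖x‖₂ ≤ S := (hA x).trans <| by
    simpa only [S, hw] using norm_toLp_two_le_sum_elim_left (x ᵥ* A) (x ᵥ* B + y ᵥ* D)
  have hsplit :
      u ᵥ* fromBlocks A 0 0 D = u ᵥ* fromBlocks A B 0 D - Sum.elim (0 : m → ℝ) (x ᵥ* B) := by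
    rw [hw]
    ext (_ | _) <;> simp [vecMul_fromBlocks, x, y]
  calc min α (minSingularValue D)
      ≤ ‖u ᵥ* fromBlocks A 0 0 D‖₂ := by
        simpa [hu] using min_mul_norm_le_norm_vecMul_fromBlocks_diagonal D hα.le hA u
    _ ≤ S + ‖x ᵥ* B‖₂ := by
        rw [hsplit, toLp_sub, ← norm_toLp_two_sum_elim_zero (ι := m) (x ᵥ* B)]
        exact norm_sub_le _ _
    _ ≤ S + β * (S / α) := by
        gcongr
        exact (hB x).trans (by gcongr; rwa [le_div_iff₀' hα])
    _ = S * (1 + β / α) := by ring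

end BlockTriangular

theorem block_upper_triangular_min_singular_value_general
    (e p : ℕ)
    (a : ℝ) (z : Fin p → ℝ) (D : Matrix (Fin e) (Fin p) ℝ)
    (M : Matrix (Unit ⊕ Fin e) (Unit ⊕ Fin p) ℝ)
    (hM : M = Matrix.fromBlocks (Matrix.of fun _ _ => a) (Matrix.of fun _ j => z j) 0 D) :
    min |a| (minSingularValue D) / (1 + Real.sqrt (∑ j, (z j) ^ 2) / |a|) ≤
      minSingularValue M := by
  subst hM
  rcases eq_or_ne a 0 with rfl | ha
  · simp [minSingularValue_nonneg]
  rw [← norm_toLp_two_eq_sqrt]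
  refine min_div_le_minSingularValue_fromBlocks D (abs_pos.2 ha) (norm_nonneg _)
    (fun x => ?_) (fun x => ?_)
  · rw [vecMul_of_const_row x fun _ => a, toLp_smul, norm_smul, norm_toLp_two_unit,
      norm_toLp_two_unit, Real.norm_eq_abs, mul_comm]
  · rw [vecMul_of_const_row, toLp_smul, norm_smul, norm_toLp_two_unit, Real.norm_eq_abs,
      mul_comm]

/-- Minimal singular value of a block upper-triangular matrix
`M = [[a, zᵀ],[0, D]] ∈ ℝ^{q×(p+1)}` (with `q−1 ≤ p`, here `q = e+1`):
`σ_q(M) ≥ min{|a|, σ_{q−1}(D)} / (1 + ‖z‖₂/|a|)`. Since `q` (resp. `q−1`) equals the number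
of rows of `M` (resp. `D`) and is at most the number of columns, `σ_q(M)` and `σ_{q−1}(D)`
are the smallest singular values of `M` and `D`. -/
theorem block_upper_triangular_min_singular_value
    (e p : ℕ) (hep : e ≤ p)
    (a : ℝ) (ha : a ≠ 0) (z : Fin p → ℝ) (D : Matrix (Fin e) (Fin p) ℝ)
    (M : Matrix (Unit ⊕ Fin e) (Unit ⊕ Fin p) ℝ)
    (hM : M = Matrix.fromBlocks (Matrix.of fun _ _ => a) (Matrix.of fun _ j => z j) 0 D) :
    min |a| (minSingularValue D) / (1 + Real.sqrt (∑ j, (z j) ^ 2) / |a|) ≤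
      minSingularValue M :=
  block_upper_triangular_min_singular_value_general e p a z D M hM
end
end

section
/- Fix A ∈ ℝ^{k×n}, Y ∈ ℝ^{m×n}, n ≥ 1, and define 𝓛(W) := (1/(2n))‖WA − Y‖_F² on ℝ^{m×k}, with gradient G := ∇𝓛(W) = (1/n)(WA − Y)Aᵀ. Let 𝒫 be a partition of the coordinate set [m]×[k]; for p ∈ 𝒫 let Π_p : ℝ^{m×k} → ℝ^{m×k} be the coordinate projection that zeroes all entries outside p, and set U_p := Π_pU and G_p := Π_pG. Let R_p := {i ∈ [m] : ∃j, (i,j) ∈ p} and C_p := {j ∈ [k] : ∃i, (i,j) ∈ p}, and define ν := max_{i∈[m]} |{p ∈ 𝒫 : i ∈ R_p}|, μ := max_{j∈[k]} |{p ∈ 𝒫 : j ∈ C_p}|, and κ := min{μ, ν}. Then for all W, U ∈ ℝ^{m×k}: 𝓛(W+U) ≤ 𝓛(W) + Σ_{p∈𝒫} ⟨G_p, U_p⟩ + (κ‖A‖_F²/(2n)) · Σ_{p∈𝒫} ‖U_p‖_op². -/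
open scoped Classical

noncomputable section

lemma frobSq_nonneg_s19 {a b : Type*} [Fintype a] [Fintype b] (M : Matrix a b ℝ) : 0 ≤ frobSq M :=
  Finset.sum_nonneg fun _ _ => Finset.sum_nonneg fun _ _ => sq_nonneg _

lemma opNorm_nonneg {a b : Type*} [Fintype a] [Fintype b] [DecidableEq b]
    (M : Matrix a b ℝ) : 0 ≤ opNorm M := norm_nonneg _

lemma sum_sq_mulVec_le {a b : ℕ} (M : Matrix (Fin a) (Fin b) ℝ) (x : Fin b → ℝ) :
    ∑ i, (M.mulVec x i) ^ 2 ≤ opNorm M ^ 2 * ∑ j, (x j) ^ 2 := by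
  set L := LinearMap.toContinuousLinearMap (Matrix.toEuclideanLin M) with hL
  set v : EuclideanSpace ℝ (Fin b) := (WithLp.equiv 2 (Fin b → ℝ)).symm x with hv
  have h1 : ‖L v‖ ≤ ‖L‖ * ‖v‖ := L.le_opNorm v
  have hLv : L v = (WithLp.equiv 2 (Fin a → ℝ)).symm (M.mulVec x) := rfl
  have hnLv : ‖L v‖ ^ 2 = ∑ i, (M.mulVec x i) ^ 2 := by
    rw [hLv, EuclideanSpace.norm_eq, Real.sq_sqrt (by positivity)]
    simp [Real.norm_eq_abs, sq_abs]
  have hnv : ‖v‖ ^ 2 = ∑ j, (x j) ^ 2 := by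
    rw [hv, EuclideanSpace.norm_eq, Real.sq_sqrt (by positivity)]
    simp [Real.norm_eq_abs, sq_abs]
  calc ∑ i, (M.mulVec x i) ^ 2 = ‖L v‖ ^ 2 := hnLv.symm
    _ ≤ (‖L‖ * ‖v‖) ^ 2 := pow_le_pow_left₀ (norm_nonneg _) h1 2
    _ = opNorm M ^ 2 * ∑ j, (x j) ^ 2 := by rw [mul_pow, hnv]; rfl

lemma frobSq_mul_le {a b c : ℕ} (M : Matrix (Fin a) (Fin b) ℝ) (B : Matrix (Fin b) (Fin c) ℝ) :
    frobSq (M * B) ≤ opNorm M ^ 2 * frobSq B := by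
  have key : ∀ t, ∑ i, ((M * B) i t) ^ 2 ≤ opNorm M ^ 2 * ∑ j, (B j t) ^ 2 := by
    intro t
    have : ∀ i, (M * B) i t = M.mulVec (fun j => B j t) i := by
      intro i; simp [Matrix.mul_apply, Matrix.mulVec, dotProduct]
    simp_rw [this]
    exact sum_sq_mulVec_le M _
  calc frobSq (M * B) = ∑ t, ∑ i, ((M * B) i t) ^ 2 := Finset.sum_comm
    _ ≤ ∑ t, opNorm M ^ 2 * ∑ j, (B j t) ^ 2 := Finset.sum_le_sum fun t _ => key t
    _ = opNorm M ^ 2 * frobSq B := by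
        rw [← Finset.mul_sum, frobSq, Finset.sum_comm]

lemma partition_sum {m k : ℕ} (Part : Finset (Finset (Fin m × Fin k)))
    (hdisj : ∀ p ∈ Part, ∀ q ∈ Part, p ≠ q → Disjoint p q)
    (hcover : ∀ x : Fin m × Fin k, ∃ p ∈ Part, x ∈ p)
    (g : Fin m × Fin k → ℝ) :
    ∑ p ∈ Part, ∑ x ∈ p, g x = ∑ x : Fin m × Fin k, g x := by
  have huniv : Part.biUnion id = Finset.univ := by
    ext x
    simp only [Finset.mem_biUnion, Finset.mem_univ, iff_true, id]
    exact hcover x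
  rw [← huniv]
  exact (Finset.sum_biUnion (fun p hp q hq hpq => hdisj p hp q hq hpq)).symm

lemma sum_ite_mem_prod {m k : ℕ} (p : Finset (Fin m × Fin k)) (h : Fin m → Fin k → ℝ) :
    (∑ i, ∑ j, if (i, j) ∈ p then h i j else 0) = ∑ x ∈ p, h x.1 x.2 := by
  have := Fintype.sum_prod_type (f := fun x : Fin m × Fin k => if x ∈ p then h x.1 x.2 else 0)
  rw [← this, Finset.sum_ite_mem, Finset.univ_inter]

section Part

variable {m k n : ℕ}
  (A : Matrix (Fin k) (Fin n) ℝ)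
  (Part : Finset (Finset (Fin m × Fin k)))
  (hdisj : ∀ p ∈ Part, ∀ q ∈ Part, p ≠ q → Disjoint p q)
  (hcover : ∀ x : Fin m × Fin k, ∃ p ∈ Part, x ∈ p)
  (proj : Finset (Fin m × Fin k) → Matrix (Fin m) (Fin k) ℝ → Matrix (Fin m) (Fin k) ℝ)
  (hproj : ∀ p U i j, proj p U i j = if (i, j) ∈ p then U i j else 0)

include hdisj hcover hproj in
lemma proj_sum (M : Matrix (Fin m) (Fin k) ℝ) (i : Fin m) (j : Fin k) :
    ∑ p ∈ Part, proj p M i j = M i j := by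
  obtain ⟨p₀, hp₀, hx⟩ := hcover (i, j)
  rw [Finset.sum_eq_single_of_mem p₀ hp₀]
  · rw [hproj]; simp [hx]
  · intro q hq hne
    have : (i, j) ∉ q := fun hmem => (Finset.disjoint_left.mp (hdisj q hq p₀ hp₀ hne) hmem) hx
    rw [hproj]; simp [this]

include hdisj hcover hproj in
lemma mul_proj_sum (U : Matrix (Fin m) (Fin k) ℝ) (i : Fin m) (t : Fin n) :
    ∑ p ∈ Part, (proj p U * A) i t = (U * A) i t := by
  simp only [Matrix.mul_apply]
  rw [Finset.sum_comm]
  exact Finset.sum_congr rfl fun j _ => by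
    rw [← Finset.sum_mul, proj_sum Part hdisj hcover proj hproj U i j]

include hdisj hcover hproj in
lemma nu_bound (ν : ℕ)
    (hν : ν = Finset.univ.sup fun i : Fin m =>
      (Part.filter fun p => ∃ j, (i, j) ∈ p).card)
    (U : Matrix (Fin m) (Fin k) ℝ) :
    frobSq (U * A) ≤ (ν : ℝ) * ∑ p ∈ Part, frobSq (proj p U * A) := by
  set S : Fin m → Finset (Finset (Fin m × Fin k)) :=
    fun i => Part.filter fun p => ∃ j, (i, j) ∈ p with hS
  have hpt : ∀ i t, ((U * A) i t) ^ 2 ≤ (ν : ℝ) * ∑ p ∈ Part, ((proj p U * A) i t) ^ 2 := by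
    intro i t
    have h2 : ∀ p ∈ Part, p ∉ S i → (proj p U * A) i t = 0 := by
      intro p hp hpS
      have hj : ∀ j, (i, j) ∉ p := by
        intro j hj
        exact hpS (Finset.mem_filter.mpr ⟨hp, ⟨j, hj⟩⟩)
      have hz : ∀ j, proj p U i j = 0 := fun j => by rw [hproj]; simp [hj j]
      simp [Matrix.mul_apply, hz]
    have h1 : (U * A) i t = ∑ p ∈ S i, (proj p U * A) i t := by
      rw [← mul_proj_sum A Part hdisj hcover proj hproj U i t]
      exact (Finset.sum_subset (Finset.filter_subset _ _) h2).symm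
    rw [h1]
    have hcard : ((S i).card : ℝ) ≤ (ν : ℝ) := by
      exact_mod_cast hν ▸ Finset.le_sup (Finset.mem_univ i)
    calc (∑ p ∈ S i, (proj p U * A) i t) ^ 2
        ≤ (S i).card * ∑ p ∈ S i, ((proj p U * A) i t) ^ 2 := sq_sum_le_card_mul_sum_sq
      _ ≤ (ν : ℝ) * ∑ p ∈ Part, ((proj p U * A) i t) ^ 2 := by
          apply mul_le_mul hcard
          · exact Finset.sum_le_sum_of_subset_of_nonneg (Finset.filter_subset _ _)
              (fun p _ _ => sq_nonneg _)
          · exact Finset.sum_nonneg fun p _ => sq_nonneg _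
          · exact Nat.cast_nonneg _
  calc frobSq (U * A) = ∑ i, ∑ t, ((U * A) i t) ^ 2 := rfl
    _ ≤ ∑ i, ∑ t, (ν : ℝ) * ∑ p ∈ Part, ((proj p U * A) i t) ^ 2 :=
        Finset.sum_le_sum fun i _ => Finset.sum_le_sum fun t _ => hpt i t
    _ = (ν : ℝ) * ∑ i, ∑ t, ∑ p ∈ Part, ((proj p U * A) i t) ^ 2 := by
        simp_rw [Finset.mul_sum]
    _ = (ν : ℝ) * ∑ p ∈ Part, frobSq (proj p U * A) := by
        congr 1
        calc ∑ i, ∑ t, ∑ p ∈ Part, ((proj p U * A) i t) ^ 2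
            = ∑ i, ∑ p ∈ Part, ∑ t, ((proj p U * A) i t) ^ 2 :=
              Finset.sum_congr rfl fun i _ => Finset.sum_comm
          _ = ∑ p ∈ Part, ∑ i, ∑ t, ((proj p U * A) i t) ^ 2 := Finset.sum_comm
          _ = ∑ p ∈ Part, frobSq (proj p U * A) := rfl

lemma euc_norm_sq {a b : ℕ} (v : Fin a × Fin b → ℝ) :
    ‖(EuclideanSpace.equiv (Fin a × Fin b) ℝ).symm v‖ ^ 2 = ∑ i, ∑ j, (v (i, j)) ^ 2 := by
  rw [EuclideanSpace.norm_eq, Real.sq_sqrt (by positivity)]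
  have h1 : ∀ x : Fin a × Fin b, ‖(EuclideanSpace.equiv (Fin a × Fin b) ℝ).symm v x‖ ^ 2
      = (v x) ^ 2 := by
    intro x
    have : (EuclideanSpace.equiv (Fin a × Fin b) ℝ).symm v x = v x := rfl
    rw [this, Real.norm_eq_abs, sq_abs]
  simp_rw [h1]
  exact Fintype.sum_prod_type (f := fun x : Fin a × Fin b => (v x) ^ 2)

include hdisj hcover hproj in
lemma mu_bound (μ : ℕ)
    (hμ : μ = Finset.univ.sup fun j : Fin k =>
      (Part.filter fun p => ∃ i, (i, j) ∈ p).card)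
    (U : Matrix (Fin m) (Fin k) ℝ) :
    frobSq (U * A) ≤ (μ : ℝ) * frobSq A * ∑ p ∈ Part, opNorm (proj p U) ^ 2 := by
  set A' : Finset (Fin m × Fin k) → Matrix (Fin k) (Fin n) ℝ :=
    fun p => Matrix.of fun c t => if ∃ i, (i, c) ∈ p then A c t else 0 with hA'
  have hprojA : ∀ p, proj p U * A = proj p U * A' p := by
    intro p
    ext i t
    simp only [Matrix.mul_apply]
    apply Finset.sum_congr rfl
    intro c _
    by_cases hc : ∃ i', (i', c) ∈ p
    · simp [hA', hc]
    · have hz : proj p U i c = 0 := by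
        rw [hproj]
        have : (i, c) ∉ p := fun hmem => hc ⟨i, hmem⟩
        simp [this]
      simp [hz]
  have hfA' : ∀ p, frobSq (proj p U * A) ≤ opNorm (proj p U) ^ 2 * frobSq (A' p) := by
    intro p; rw [hprojA p]; exact frobSq_mul_le _ _
  have hA'sum : ∑ p ∈ Part, frobSq (A' p) ≤ (μ : ℝ) * frobSq A := by
    have hc : ∀ c : Fin k, ∑ p ∈ Part, (∑ t, (A' p c t) ^ 2) ≤ (μ : ℝ) * ∑ t, (A c t) ^ 2 := by
      intro c
      have hS : (0:ℝ) ≤ ∑ t, (A c t) ^ 2 := Finset.sum_nonneg fun _ _ => sq_nonneg _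
      have h1 : ∀ p, (∑ t, (A' p c t) ^ 2) =
          if ∃ i, (i, c) ∈ p then ∑ t, (A c t) ^ 2 else 0 := by
        intro p
        by_cases hcp : ∃ i, (i, c) ∈ p <;> simp [hA', hcp]
      simp_rw [h1]
      rw [← Finset.sum_filter, Finset.sum_const, nsmul_eq_mul]
      apply mul_le_mul_of_nonneg_right _ hS
      exact_mod_cast hμ ▸ Finset.le_sup (Finset.mem_univ c)
    calc ∑ p ∈ Part, frobSq (A' p) = ∑ c, ∑ p ∈ Part, ∑ t, (A' p c t) ^ 2 := Finset.sum_comm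
      _ ≤ ∑ c, (μ : ℝ) * ∑ t, (A c t) ^ 2 := Finset.sum_le_sum fun c _ => hc c
      _ = (μ : ℝ) * frobSq A := by rw [← Finset.mul_sum]; rfl
  set E := (EuclideanSpace.equiv (Fin m × Fin n) ℝ).symm with hE
  set e : Matrix (Fin m) (Fin n) ℝ → EuclideanSpace ℝ (Fin m × Fin n) :=
    fun M => E (fun x => M x.1 x.2) with he
  have he_norm : ∀ M : Matrix (Fin m) (Fin n) ℝ, ‖e M‖ ^ 2 = frobSq M := by
    intro M; rw [he]; exact euc_norm_sq _
  have hsum_e : e (U * A) = ∑ p ∈ Part, e (proj p U * A) := by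
    have hv : (fun x : Fin m × Fin n => (U * A) x.1 x.2) =
        ∑ p ∈ Part, (fun x : Fin m × Fin n => (proj p U * A) x.1 x.2) := by
      funext x
      rw [Finset.sum_apply]
      exact (mul_proj_sum A Part hdisj hcover proj hproj U x.1 x.2).symm
    rw [he]
    simp only []
    rw [hv, map_sum]
  have hterm : ∀ p ∈ Part, ‖e (proj p U * A)‖ ≤
      opNorm (proj p U) * Real.sqrt (frobSq (A' p)) := by
    intro p _
    have hsq : ‖e (proj p U * A)‖ ^ 2 ≤ (opNorm (proj p U) * Real.sqrt (frobSq (A' p))) ^ 2 := by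
      rw [he_norm, mul_pow, Real.sq_sqrt (frobSq_nonneg_s19 _)]
      exact hfA' p
    have := Real.sqrt_le_sqrt hsq
    rwa [Real.sqrt_sq (norm_nonneg _),
      Real.sqrt_sq (mul_nonneg (opNorm_nonneg _) (Real.sqrt_nonneg _))] at this
  calc frobSq (U * A) = ‖e (U * A)‖ ^ 2 := (he_norm _).symm
    _ ≤ (∑ p ∈ Part, ‖e (proj p U * A)‖) ^ 2 := by
        apply pow_le_pow_left₀ (norm_nonneg _) _ 2
        rw [hsum_e]; exact norm_sum_le _ _
    _ ≤ (∑ p ∈ Part, opNorm (proj p U) * Real.sqrt (frobSq (A' p))) ^ 2 := by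
        apply pow_le_pow_left₀ (Finset.sum_nonneg fun _ _ => norm_nonneg _)
        exact Finset.sum_le_sum hterm
    _ ≤ (∑ p ∈ Part, opNorm (proj p U) ^ 2) * ∑ p ∈ Part, Real.sqrt (frobSq (A' p)) ^ 2 :=
        Finset.sum_mul_sq_le_sq_mul_sq Part _ _
    _ = (∑ p ∈ Part, opNorm (proj p U) ^ 2) * ∑ p ∈ Part, frobSq (A' p) := by
        congr 1
        exact Finset.sum_congr rfl fun p _ => Real.sq_sqrt (frobSq_nonneg_s19 _)
    _ ≤ (∑ p ∈ Part, opNorm (proj p U) ^ 2) * ((μ : ℝ) * frobSq A) :=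
        mul_le_mul_of_nonneg_left hA'sum
          (Finset.sum_nonneg fun p _ => sq_nonneg _)
    _ = (μ : ℝ) * frobSq A * ∑ p ∈ Part, opNorm (proj p U) ^ 2 := by ring

end Part

/-- Partitioned spectral majorization for least squares: for the loss
`𝓛(W) = (1/(2n))‖WA − Y‖_F²` with gradient `G(W) = (1/n)(WA − Y)Aᵀ` and any partition `Part` of
the coordinates `[m]×[k]` with overlap multiplicity `κ = min{μ,ν}`,
`𝓛(W+U) ≤ 𝓛(W) + Σ_p ⟨G_p,U_p⟩ + (κ‖A‖_F²/(2n))·Σ_p ‖U_p‖_op²`. -/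
theorem partitioned_spectral_majorization
    (m k n : ℕ) (hn : 0 < n)
    (A : Matrix (Fin k) (Fin n) ℝ) (Y : Matrix (Fin m) (Fin n) ℝ)
    (Part : Finset (Finset (Fin m × Fin k)))
    (hdisj : ∀ p ∈ Part, ∀ q ∈ Part, p ≠ q → Disjoint p q)
    (hcover : ∀ x : Fin m × Fin k, ∃ p ∈ Part, x ∈ p)
    (proj : Finset (Fin m × Fin k) → Matrix (Fin m) (Fin k) ℝ → Matrix (Fin m) (Fin k) ℝ)
    (hproj : ∀ p U i j, proj p U i j = if (i, j) ∈ p then U i j else 0)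
    (ν μ κ : ℕ)
    (hν : ν = Finset.univ.sup fun i : Fin m =>
      (Part.filter fun p => ∃ j, (i, j) ∈ p).card)
    (hμ : μ = Finset.univ.sup fun j : Fin k =>
      (Part.filter fun p => ∃ i, (i, j) ∈ p).card)
    (hκ : κ = min μ ν)
    (lossL : Matrix (Fin m) (Fin k) ℝ → ℝ)
    (hloss : ∀ W, lossL W = (1 / (2 * (n : ℝ))) * frobSq (W * A - Y))
    (G : Matrix (Fin m) (Fin k) ℝ → Matrix (Fin m) (Fin k) ℝ)
    (hG : ∀ W, G W = (1 / (n : ℝ)) • ((W * A - Y) * A.transpose)) :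
    ∀ W U : Matrix (Fin m) (Fin k) ℝ,
      lossL (W + U) ≤ lossL W
        + (∑ p ∈ Part, ∑ i, ∑ j, proj p (G W) i j * proj p U i j)
        + ((κ : ℝ) * frobSq A / (2 * (n : ℝ))) * ∑ p ∈ Part, (opNorm (proj p U)) ^ 2 := by
  intro W U
  -- the partitioned inner product is the full inner product
  have hinner : (∑ p ∈ Part, ∑ i, ∑ j, proj p (G W) i j * proj p U i j)
      = ∑ i, ∑ j, G W i j * U i j := by
    have h1 : ∀ p ∈ Part, (∑ i, ∑ j, proj p (G W) i j * proj p U i j)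
        = ∑ x ∈ p, G W x.1 x.2 * U x.1 x.2 := by
      intro p _
      rw [← sum_ite_mem_prod p (fun i j => G W i j * U i j)]
      refine Finset.sum_congr rfl fun i _ => Finset.sum_congr rfl fun j _ => ?_
      rw [hproj, hproj]
      by_cases hx : (i, j) ∈ p <;> simp [hx]
    rw [Finset.sum_congr rfl h1, partition_sum Part hdisj hcover _]
    exact Fintype.sum_prod_type (f := fun x : Fin m × Fin k => G W x.1 x.2 * U x.1 x.2)
  -- quadratic expansion of the loss
  have frob_add : ∀ M N : Matrix (Fin m) (Fin n) ℝ,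
      frobSq (M + N) = frobSq M + 2 * (∑ i, ∑ t, M i t * N i t) + frobSq N := by
    intro M N
    simp only [frobSq, Matrix.add_apply, Finset.mul_sum, ← Finset.sum_add_distrib]
    exact Finset.sum_congr rfl fun i _ => Finset.sum_congr rfl fun t _ => by ring
  have cross : (∑ i, ∑ t, (W * A - Y) i t * (U * A) i t)
      = ∑ i, ∑ j, ((W * A - Y) * A.transpose) i j * U i j := by
    refine Finset.sum_congr rfl fun i _ => ?_
    simp only [Matrix.mul_apply, Matrix.transpose_apply, Finset.mul_sum, Finset.sum_mul]
    rw [Finset.sum_comm]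
    exact Finset.sum_congr rfl fun j _ => Finset.sum_congr rfl fun t _ => by ring
  have hGU : (∑ i, ∑ j, G W i j * U i j)
      = (1 / (n : ℝ)) * ∑ i, ∑ j, ((W * A - Y) * A.transpose) i j * U i j := by
    rw [Finset.mul_sum]
    refine Finset.sum_congr rfl fun i _ => ?_
    rw [Finset.mul_sum]
    refine Finset.sum_congr rfl fun j _ => ?_
    rw [hG]
    simp only [Matrix.smul_apply, smul_eq_mul]
    ring
  have hexpand : lossL (W + U) = lossL W + (∑ i, ∑ j, G W i j * U i j)
      + (1 / (2 * (n : ℝ))) * frobSq (U * A) := by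
    simp only [hloss]
    have hM : (W + U) * A - Y = (W * A - Y) + U * A := by
      rw [Matrix.add_mul]; abel
    rw [hM, frob_add (W * A - Y) (U * A), cross, hGU]
    have hn' : (n : ℝ) ≠ 0 := Nat.cast_ne_zero.mpr hn.ne'
    field_simp
  -- the key spectral bound
  have key : frobSq (U * A) ≤ (κ : ℝ) * frobSq A * ∑ p ∈ Part, opNorm (proj p U) ^ 2 := by
    rcases le_total μ ν with h | h
    · rw [hκ, min_eq_left h]
      exact mu_bound A Part hdisj hcover proj hproj μ hμ U
    · rw [hκ, min_eq_right h]
      calc frobSq (U * A) ≤ (ν : ℝ) * ∑ p ∈ Part, frobSq (proj p U * A) :=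
            nu_bound A Part hdisj hcover proj hproj ν hν U
        _ ≤ (ν : ℝ) * ∑ p ∈ Part, opNorm (proj p U) ^ 2 * frobSq A := by
            apply mul_le_mul_of_nonneg_left
              (Finset.sum_le_sum fun p _ => frobSq_mul_le _ A) (Nat.cast_nonneg _)
        _ = (ν : ℝ) * frobSq A * ∑ p ∈ Part, opNorm (proj p U) ^ 2 := by
            rw [← Finset.sum_mul]; ring
  rw [hexpand, hinner]
  have h2n : (0:ℝ) ≤ 1 / (2 * (n : ℝ)) := by positivity
  have hfin : (1 / (2 * (n : ℝ))) * frobSq (U * A)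
      ≤ ((κ : ℝ) * frobSq A / (2 * (n : ℝ))) * ∑ p ∈ Part, opNorm (proj p U) ^ 2 := by
    calc (1 / (2 * (n : ℝ))) * frobSq (U * A)
        ≤ (1 / (2 * (n : ℝ))) * ((κ : ℝ) * frobSq A * ∑ p ∈ Part, opNorm (proj p U) ^ 2) :=
          mul_le_mul_of_nonneg_left key h2n
      _ = ((κ : ℝ) * frobSq A / (2 * (n : ℝ))) * ∑ p ∈ Part, opNorm (proj p U) ^ 2 := by
          ring
  linarith [hfin]
end
end
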